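/- Let Π be a CNF theory, M a model of Π, and S the steady set of M for Π. A set of atoms E is erasable in M for Π if and only if E is erasable in M \ S for the simplified theory (simpl(Π,M))_{M\S}. -/

import Mathlib

structure Clause where
  head : Finset ℕ
  body : Finset ℕ
deriving DecidableEq

abbrev Theory := Finset Clause

/-- interpretation I satisfies clause c -/
def satC (I : Finset ℕ) (c : Clause) : Prop :=
  (c.head ∩ I).Nonempty ∨ ¬ c.body ⊆ I

def isModel (T : Theory) (I : Finset ℕ) : Prop := ∀ c ∈ T, satC I c

def isMinModel (T : Theory) (I : Finset ℕ) : Prop :=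
  isModel T I ∧ ∀ J ⊂ I, ¬ isModel T J

def Positive (T : Theory) : Prop := ∀ c ∈ T, c.head.Nonempty

def Horn (T : Theory) : Prop := ∀ c ∈ T, c.head.card = 1

/-- atoms occurring in a theory -/
def atoms (T : Theory) : Finset ℕ := T.biUnion (fun c => c.head ∪ c.body)

/-- c_{X←} : project head on X -/
def projHeadC (c : Clause) (X : Finset ℕ) : Clause := ⟨c.head ∩ X, c.body⟩
/-- c_X : project head and body on X -/
def projC (c : Clause) (X : Finset ℕ) : Clause := ⟨c.head ∩ X, c.body ∩ X⟩

/-- Π_{X←} -/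
def projHeadT (T : Theory) (X : Finset ℕ) : Theory :=
  (T.image (fun c => projHeadC c X)).filter (fun c => c.head.Nonempty)

/-- Π_X -/
def projT (T : Theory) (X : Finset ℕ) : Theory :=
  (T.image (fun c => projC c X)).filter (fun c => c.head.Nonempty)

/-- Π^{nd} : single-head fragment -/
def nd (T : Theory) : Theory := T.filter (fun c => c.head.card = 1)

/-- the steady set of M for Π is the minimal model of Π^{nd}_{M←} -/
def isSteady (T : Theory) (M S : Finset ℕ) : Prop :=
  isMinModel (nd (projHeadT T M)) S

def simpl (T : Theory) (M S : Finset ℕ) : Theory :=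
  T.filter (fun c => c.head ∩ S = ∅ ∧ c.body ⊆ M)

/-- simplified theory of Π w.r.t. M (with steady set S) -/
def simplT (T : Theory) (M S : Finset ℕ) : Theory := projT (simpl T M S) (M \ S)

/-- E erasable in M for T -/
def Erasable (T : Theory) (M E : Finset ℕ) : Prop :=
  E.Nonempty ∧ E ⊆ M ∧ isModel T (M \ E)

def Outbound (T : Theory) (Y Z : Finset ℕ) : Prop :=
  ∃ c ∈ T, (c.head ∩ Z).Nonempty ∧ (c.body ∩ (Y \ Z)).Nonempty ∧
    c.body ∩ Z = ∅ ∧ c.head ∩ (Y \ Z) = ∅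

def Elementary (T : Theory) (Y : Finset ℕ) : Prop :=
  Y.Nonempty ∧ Y ⊆ atoms T ∧ ∀ Z, Z ⊂ Y → Z.Nonempty → Outbound T Y Z

def HEF (T : Theory) : Prop :=
  ∀ c ∈ T, ∀ E, Elementary T E → (E ∩ c.head).card ≤ 1

def DisjunctiveSet (T : Theory) (S : Finset ℕ) : Prop :=
  ∃ c ∈ T, 1 < (c.head ∩ S).card

def SuperElementary (T : Theory) (X : Finset ℕ) : Prop :=
  Elementary T X ∧ ¬ Outbound T (atoms T) X

def posForm (T : Theory) (phi : ℕ) : Theory :=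
  T.filter (fun c => c.head.Nonempty) ∪
  (T.filter (fun c => c.head = ∅)).image (fun c => ⟨{phi}, c.body⟩) ∪
  (atoms T).image (fun a => ⟨{a}, {phi}⟩)

/-!
Since `Π^{nd}_{M←}` is Horn, its minimal model `S` is its least model, and every model
`N ⊆ M` of `Π` is a model of it; in particular `S ⊆ M` and `S ⊆ M \ E` for every `E` erasable
in `M`, so erasable sets avoid `S`. For `E ⊆ M \ S`, a clause with a head atom in `S` or a body
atom outside `M` is satisfied by `M \ E` anyway, and for every other clause `c`, satisfaction of
`c` by `M \ E` is satisfaction of `c_{M \ S}` by `(M \ S) \ E`. Since `M` is a model, no such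
clause loses its whole head in the projection, so each of them appears in the simplified theory.
-/

namespace Clause

theorem satC_inter {c : Clause} {I J : Finset ℕ} (hc : c.head.card = 1)
    (hI : satC I c) (hJ : satC J c) : satC (I ∩ J) c := by
  obtain ⟨a, ha⟩ := Finset.card_eq_one.mp hc
  simp only [satC, ha, Finset.Nonempty, Finset.mem_inter, Finset.mem_singleton,
    exists_eq_left, Finset.subset_inter_iff] at hI hJ ⊢
  tauto

theorem satC_sdiff_iff_satC_projC {c : Clause} {M S E : Finset ℕ} (hcS : Disjoint c.head S)
    (hcM : c.body ⊆ M) (hE : E ⊆ M \ S) :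
    satC (M \ E) c ↔ satC ((M \ S) \ E) (projC c (M \ S)) := by
  simp only [satC, projC, Finset.Nonempty, Finset.subset_iff, Finset.mem_inter,
    Finset.mem_sdiff] at hE hcM ⊢
  have := Finset.disjoint_left.mp hcS
  grind

end Clause

theorem Horn.isModel_inter {T : Theory} {I J : Finset ℕ} (hT : Horn T)
    (hI : isModel T I) (hJ : isModel T J) : isModel T (I ∩ J) :=
  fun c hc => Clause.satC_inter (hT c hc) (hI c hc) (hJ c hc)

theorem isModel.mono {T T' : Theory} {I : Finset ℕ} (hI : isModel T I) (h : T' ⊆ T) :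
    isModel T' I :=
  fun c hc => hI c (h hc)

theorem isModel.head_inter_nonempty {T : Theory} {M : Finset ℕ} (hM : isModel T M)
    {c : Clause} (hc : c ∈ T) (hcM : c.body ⊆ M) : (c.head ∩ M).Nonempty :=
  (hM c hc).resolve_right (not_not.mpr hcM)

theorem horn_nd (T : Theory) : Horn (nd T) :=
  fun _ hc => (Finset.mem_filter.mp hc).2

theorem isModel_projHeadT_self (T : Theory) (X : Finset ℕ) : isModel (projHeadT T X) X := by
  intro c hc
  simp only [projHeadT, Finset.mem_filter, Finset.mem_image] at hc
  obtain ⟨⟨c, -, rfl⟩, hne⟩ := hc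
  exact Or.inl (by simpa [projHeadC, Finset.inter_assoc] using hne)

theorem isModel.projHeadT_of_subset {T : Theory} {X N : Finset ℕ} (hN : isModel T N)
    (hNX : N ⊆ X) : isModel (projHeadT T X) N := by
  intro c hc
  simp only [projHeadT, Finset.mem_filter, Finset.mem_image] at hc
  obtain ⟨⟨c, hc, rfl⟩, -⟩ := hc
  simpa [satC, projHeadC, Finset.inter_assoc, Finset.inter_eq_right.mpr hNX] using hN c hc

theorem isMinModel.subset_of_isModel {T : Theory} {S N : Finset ℕ} (hT : Horn T)
    (hS : isMinModel T S) (hN : isModel T N) : S ⊆ N := by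
  by_contra hSN
  have hlt : S ∩ N ⊂ S :=
    Finset.ssubset_iff_subset_ne.mpr ⟨Finset.inter_subset_left, by simpa using hSN⟩
  exact hS.2 _ hlt (hT.isModel_inter hS.1 hN)

theorem isSteady.subset_of_isModel {T : Theory} {M S N : Finset ℕ} (hS : isSteady T M S)
    (hNM : N ⊆ M) (hN : isModel T N) : S ⊆ N :=
  isMinModel.subset_of_isModel (horn_nd _) hS
    ((hN.projHeadT_of_subset hNM).mono (Finset.filter_subset _ _))

theorem isSteady.subset {T : Theory} {M S : Finset ℕ} (hS : isSteady T M S) : S ⊆ M :=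
  isMinModel.subset_of_isModel (horn_nd _) hS
    ((isModel_projHeadT_self T M).mono (Finset.filter_subset _ _))

theorem mem_simplT {T : Theory} {M S : Finset ℕ} {c : Clause} (hc : c ∈ T)
    (hcS : Disjoint c.head S) (hcM : c.body ⊆ M) (hne : (c.head ∩ (M \ S)).Nonempty) :
    projC c (M \ S) ∈ simplT T M S := by
  simp only [simplT, projT, simpl, Finset.mem_filter, Finset.mem_image]
  exact ⟨⟨c, ⟨hc, Finset.disjoint_iff_inter_eq_empty.mp hcS, hcM⟩, rfl⟩, hne⟩

theorem isModel_sdiff_iff_isModel_simplT {T : Theory} {M S E : Finset ℕ} (hM : isModel T M)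
    (hSM : S ⊆ M) (hE : E ⊆ M \ S) :
    isModel T (M \ E) ↔ isModel (simplT T M S) ((M \ S) \ E) := by
  constructor
  · intro hME c' hc'
    simp only [simplT, projT, simpl, Finset.mem_filter, Finset.mem_image] at hc'
    obtain ⟨⟨c, ⟨hc, hcS, hcM⟩, rfl⟩, -⟩ := hc'
    exact (Clause.satC_sdiff_iff_satC_projC (Finset.disjoint_iff_inter_eq_empty.mpr hcS)
      hcM hE).mp (hME c hc)
  · intro hsimp c hc
    have hSME : S ⊆ M \ E :=
      Finset.subset_sdiff.mpr ⟨hSM, (Finset.subset_sdiff.mp hE).2.symm⟩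
    by_cases hcS : Disjoint c.head S
    · by_cases hcM : c.body ⊆ M
      · have hne : (c.head ∩ (M \ S)).Nonempty := by
          rw [← Finset.inter_sdiff_assoc, Finset.sdiff_eq_self_of_disjoint
            (Finset.disjoint_of_subset_left Finset.inter_subset_left hcS)]
          exact hM.head_inter_nonempty hc hcM
        exact (Clause.satC_sdiff_iff_satC_projC hcS hcM hE).mpr
          (hsimp _ (mem_simplT hc hcS hcM hne))
      · exact Or.inr fun hb => hcM (hb.trans Finset.sdiff_subset)
    · obtain ⟨a, ha⟩ := Finset.not_disjoint_iff_nonempty_inter.mp hcS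
      exact Or.inl ⟨a, Finset.inter_subset_inter_left hSME ha⟩

theorem stmt6_general (T : Theory) (M S : Finset ℕ) (hM : isModel T M) (hS : isSteady T M S)
    (E : Finset ℕ) :
    Erasable T M E ↔ Erasable (simplT T M S) (M \ S) E := by
  have hSM := hS.subset
  constructor
  · rintro ⟨hne, hEM, hME⟩
    have hSME : S ⊆ M \ E := hS.subset_of_isModel Finset.sdiff_subset hME
    have hE : E ⊆ M \ S := Finset.subset_sdiff.mpr ⟨hEM, (Finset.subset_sdiff.mp hSME).2.symm⟩
    exact ⟨hne, hE, (isModel_sdiff_iff_isModel_simplT hM hSM hE).mp hME⟩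
  · rintro ⟨hne, hE, hsimp⟩
    exact ⟨hne, hE.trans Finset.sdiff_subset,
      (isModel_sdiff_iff_isModel_simplT hM hSM hE).mpr hsimp⟩

theorem stmt6 (T : Theory) (M S : Finset ℕ) (hM : isModel T M) (hS : isSteady T M S)
    (hSM : S ⊆ M) (E : Finset ℕ) :
    Erasable T M E ↔ Erasable (simplT T M S) (M \ S) E :=
  stmt6_general T M S hM hS E
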